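/- A metric space (X,d) is Bourbaki quasi-precompact if and only if every subset of X that is uniformly chain discrete in X is finite. -/

import Mathlib

open Filter Metric Set

/-- `y` lies in the ε-chainable component of `x`: they are joined by an ε-chain. -/
def ChainConn {α : Type*} [MetricSpace α] (ε : ℝ) (x y : α) : Prop :=
  ∃ (n : ℕ) (p : ℕ → α), p 0 = x ∧ p n = y ∧ ∀ i < n, dist (p i) (p (i+1)) < ε

/-- A metric space is Bourbaki quasi-precompact: for every ε > 0 it is covered by
finitely many ε-chainable components. -/
def BourbakiQuasiPrecompact (α : Type*) [MetricSpace α] : Prop :=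
  ∀ ε > (0:ℝ), ∃ s : Finset α, ∀ x : α, ∃ p ∈ s, ChainConn ε p x

/-- A set `A` is uniformly chain discrete in the ambient space if there is `δ > 0`
such that the δ-chainable component of each `x ∈ A` meets `A` only in `x`. -/
def UniformlyChainDiscrete {α : Type*} [MetricSpace α] (A : Set α) : Prop :=
  ∃ δ > (0:ℝ), ∀ x ∈ A, ∀ y, ChainConn δ x y → y ∈ A → y = x

theorem chainConn_iff_reflTransGen {α : Type*} [MetricSpace α] (ε : ℝ) (x y : α) :
    ChainConn ε x y ↔ Relation.ReflTransGen (fun a b => dist a b < ε) x y := by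
  constructor
  · rintro ⟨n, p, h0, hn, hd⟩
    subst h0 hn
    induction n with
    | zero => exact Relation.ReflTransGen.refl
    | succ n ih =>
      exact Relation.ReflTransGen.tail (ih fun i hi => hd i (by omega)) (hd n (by omega))
  · intro h
    induction h with
    | refl => exact ⟨0, fun _ => x, rfl, rfl, by omega⟩
    | tail _ hbc ih =>
      obtain ⟨n, p, h0, hn, hd⟩ := ih
      rename_i b c _
      refine ⟨n + 1, fun i => if i ≤ n then p i else c, by simp [h0], by simp, ?_⟩
      intro i hi
      rcases lt_or_eq_of_le (Nat.lt_succ_iff.mp hi) with h | h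
      · simp only [if_pos h.le, if_pos (Nat.succ_le_of_lt h)]
        exact hd i h
      · subst h
        simp only [if_pos le_rfl, if_neg (by omega : ¬ i + 1 ≤ i), hn]
        exact hbc

theorem chainConn_refl {α : Type*} [MetricSpace α] (ε : ℝ) (x : α) : ChainConn ε x x :=
  ⟨0, fun _ => x, rfl, rfl, by omega⟩

theorem chainConn_symm {α : Type*} [MetricSpace α] {ε : ℝ} {x y : α}
    (h : ChainConn ε x y) : ChainConn ε y x := by
  rw [chainConn_iff_reflTransGen] at h ⊢
  have hsymm : Std.Symm (fun a b : α => dist a b < ε) := ⟨fun a b hab => by rwa [dist_comm]⟩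
  exact (Relation.ReflTransGen.stdSymm (r := fun a b : α => dist a b < ε)).symm _ _ h

theorem chainConn_trans {α : Type*} [MetricSpace α] {ε : ℝ} {x y z : α}
    (h1 : ChainConn ε x y) (h2 : ChainConn ε y z) : ChainConn ε x z := by
  rw [chainConn_iff_reflTransGen] at h1 h2 ⊢
  exact h1.trans h2

theorem stmt6 {X : Type*} [MetricSpace X] :
    BourbakiQuasiPrecompact X ↔ ∀ A : Set X, UniformlyChainDiscrete A → A.Finite := by
  constructor
  · rintro hB A ⟨δ, hδ, hA⟩
    obtain ⟨s, hs⟩ := hB δ hδ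
    choose f hfs hfc using hs
    have himg : (f '' A).Finite := s.finite_toSet.subset (by rintro _ ⟨a, -, rfl⟩; exact hfs a)
    refine Set.Finite.of_finite_image himg ?_
    intro a ha b hb hab
    have : ChainConn δ a b :=
      chainConn_trans (chainConn_symm (hfc a)) (hab ▸ hfc b)
    exact (hA a ha b this hb).symm
  · intro h
    by_contra hB
    simp only [BourbakiQuasiPrecompact, not_forall] at hB
    obtain ⟨ε, hε, hne⟩ := hB
    push_neg at hne
    classical
    -- for each finset, pick a point not chain-connected to any of its members
    choose F hF using hne
    -- build a sequence of finsets
    let g : ℕ → Finset X := fun n => Nat.rec ∅ (fun _ t => insert (F t) t) n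
    have hg : ∀ n, g (n + 1) = insert (F (g n)) (g n) := fun n => rfl
    have hmono : ∀ m n, m ≤ n → g m ⊆ g n := by
      intro m n hmn
      induction n with
      | zero => simp [Nat.le_zero.mp hmn]
      | succ n ih =>
        rcases Nat.lt_succ_iff_lt_or_eq.mp (Nat.lt_succ_of_le hmn) with h' | h'
        · exact (ih (Nat.lt_succ_iff.mp h')).trans
            (by rw [hg]; exact Finset.subset_insert _ _)
        · subst h'; exact Finset.Subset.refl _
    set f : ℕ → X := fun n => F (g n) with hf
    have hmem : ∀ m n, m < n → f m ∈ g n := by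
      intro m n hmn
      have : f m ∈ g (m + 1) := by rw [hg]; exact Finset.mem_insert_self _ _
      exact hmono (m + 1) n hmn this
    have hkey : ∀ m n, m < n → ¬ ChainConn ε (f m) (f n) := by
      intro m n hmn hc
      exact hF (g n) (f m) (hmem m n hmn) hc
    have hinj : Function.Injective f := by
      intro m n hmn
      by_contra hne'
      rcases Nat.lt_or_ge m n with h' | h'
      · exact hkey m n h' (hmn ▸ chainConn_refl ε (f m))
      · exact hkey n m (lt_of_le_of_ne h' (Ne.symm hne')) (hmn ▸ chainConn_refl ε (f n))
    have hfin : (Set.range f).Finite := by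
      apply h
      refine ⟨ε, hε, ?_⟩
      rintro x ⟨m, rfl⟩ y hc ⟨n, rfl⟩
      rcases Nat.lt_trichotomy m n with h' | h' | h'
      · exact absurd hc (hkey m n h')
      · rw [h']
      · exact absurd (chainConn_symm hc) (hkey n m h')
    exact Set.infinite_range_of_injective hinj hfin
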